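/- Suppose f is analytic on the unit disc with f(0)=0, f'(0)=1, f nonvanishing on the punctured disc, with zf'/f ≺ (1+2z)/(1−z), and g is analytic, normalized, with 1+zg''/g' ≺ (1+2z)/(1−z). Then for 0 ≤ α < 1 the operator T_g f(z) = ∫₀^z f(s)g'(s)ds satisfies Re(1 + z(T_g f)''/(T_g f)') > α for all |z| < (2−α)/(4+α). -/

import Mathlib

/-!
Since `(T_g f)' = f g'`, the quantity `1 + z (T_g f)''/(T_g f)'` splits as
`z f'/f + (1 + z g''/g')`. Each summand has the form `(1 + 2ω)/(1 - ω)` with `ω` a Schwarz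
function, so `|ω(z)| ≤ |z| = r` and its real part is at least `(1 - 2r)/(1 + r)`. The sum therefore
exceeds `2(1 - 2r)/(1 + r)`, which is `> α` exactly when `r < (2 - α)/(4 + α)`.
-/

open Complex Metric Set Filter Topology

/-- The Janowski bound: over `‖w‖ ≤ r` the real part of `(1 + A w)/(1 + B w)` is smallest at
`w = -r`. -/
theorem div_one_add_mul_re_ge {A B r : ℝ} {w : ℂ} (hBA : B ≤ A) (hBr : |B| * r < 1)
    (hw : ‖w‖ ≤ r) : (1 - A * r) / (1 - B * r) ≤ ((1 + A * w) / (1 + B * w)).re := by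
  have hr : 0 ≤ r := (norm_nonneg _).trans hw
  have hxy : w.re ^ 2 + w.im ^ 2 ≤ r ^ 2 := by
    rw [sq w.re, sq w.im, ← Complex.normSq_apply, ← Complex.sq_norm]
    exact pow_le_pow_left₀ (norm_nonneg _) hw 2
  have hre : ((1 + A * w) / (1 + B * w)).re
      = ((1 + A * w.re) * (1 + B * w.re) + A * B * w.im ^ 2) /
        ((1 + B * w.re) ^ 2 + (B * w.im) ^ 2) := by
    rw [Complex.div_re, Complex.normSq_apply, ← add_div]
    simp only [add_re, add_im, one_re, one_im, mul_re, mul_im, ofReal_re, ofReal_im]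
    congr 1 <;> ring
  set x := w.re
  set y := w.im
  have hxr : |x| ≤ r := abs_le_of_sq_le_sq (by nlinarith [sq_nonneg y]) hr
  have hBr_add : 0 < 1 + B * r := by nlinarith [neg_abs_le B]
  have hBr_sub : 0 < 1 - B * r := by nlinarith [le_abs_self B]
  have hBx : 0 < 1 + B * x := by
    have : |B * x| < 1 := by
      rw [abs_mul]
      exact (mul_le_mul_of_nonneg_left hxr (abs_nonneg B)).trans_lt hBr
    linarith [neg_abs_le (B * x)]
  have hden : 0 < (1 + B * x) ^ 2 + (B * y) ^ 2 := by nlinarith [sq_nonneg (B * y)]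
  rw [hre, div_le_div_iff₀ hBr_sub hden]
  -- the difference of the two sides is `(A - B) ((x + r) + B (x² + y² + r x))`
  have key : 0 ≤ (x + r) + B * (x ^ 2 + y ^ 2 + r * x) := by
    rcases le_or_gt 0 B with hB | hB
    · nlinarith [mul_nonneg (by linarith [neg_abs_le x] : 0 ≤ x + r) hBx.le,
        mul_nonneg hB (sq_nonneg y)]
    · nlinarith [mul_nonneg (by linarith [neg_abs_le x] : 0 ≤ x + r) hBr_add.le,
        mul_nonneg (neg_nonneg.2 hB.le) (sub_nonneg.2 hxy)]
  nlinarith [mul_nonneg (sub_nonneg.2 hBA) key]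

theorem div_one_add_mul_schwarz_re_ge {A B : ℝ} (hBA : B ≤ A) (hB : |B| ≤ 1) {ω : ℂ → ℂ}
    (hd : DifferentiableOn ℂ ω (ball 0 1)) (h₀ : ω 0 = 0) (hmaps : MapsTo ω (ball 0 1) (ball 0 1))
    {z : ℂ} (hz : ‖z‖ < 1) :
    (1 - A * ‖z‖) / (1 - B * ‖z‖) ≤ ((1 + A * ω z) / (1 + B * ω z)).re := by
  have hSchwarz : ‖ω z‖ ≤ ‖z‖ :=
    Complex.norm_le_norm_of_mapsTo_ball hd (hmaps.mono_right ball_subset_closedBall) h₀ hz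
  refine div_one_add_mul_re_ge hBA ?_ hSchwarz
  nlinarith [abs_nonneg B, norm_nonneg z]

theorem one_add_mul_deriv_deriv_div_deriv_of_hasDerivAt_mul {𝕜 : Type*}
    [NontriviallyNormedField 𝕜] {T f h : 𝕜 → 𝕜} {z : 𝕜}
    (hT : ∀ᶠ w in 𝓝 z, HasDerivAt T (f w * h w) w)
    (hf : DifferentiableAt 𝕜 f z) (hh : DifferentiableAt 𝕜 h z) (hfz : f z ≠ 0) (hhz : h z ≠ 0) :
    1 + z * deriv (deriv T) z / deriv T z = z * deriv f z / f z + (1 + z * deriv h z / h z) := by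
  have hT' : deriv T =ᶠ[𝓝 z] fun w ↦ f w * h w := hT.mono fun _ hw ↦ hw.deriv
  rw [hT'.deriv_eq, deriv_fun_mul hf hh, hT'.eq_of_nhds]
  field_simp
  ring

theorem lt_two_mul_div_of_lt_div {α r : ℝ} (hα : 0 < 4 + α) (hr : r < (2 - α) / (4 + α))
    (hr0 : 0 ≤ r) : α < 2 * ((1 - 2 * r) / (1 + r)) := by
  rw [lt_div_iff₀ hα] at hr
  rw [← mul_div_assoc, lt_div_iff₀ (by linarith)]
  linarith

theorem stmt3_general (α : ℝ) (hα0 : 0 ≤ α) (hα1 : α < 1)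
    (f : ℂ → ℂ) (hfd : DifferentiableOn ℂ f (ball (0:ℂ) 1))
    (hfne : ∀ z ∈ ball (0:ℂ) 1, z ≠ 0 → f z ≠ 0)
    (hfsub : ∃ ω : ℂ → ℂ, DifferentiableOn ℂ ω (ball (0:ℂ) 1) ∧ ω 0 = 0 ∧
      (∀ z ∈ ball (0:ℂ) 1, ω z ∈ ball (0:ℂ) 1) ∧
      ∀ z ∈ ball (0:ℂ) 1, z ≠ 0 →
        z * deriv f z / f z = (1 + 2 * ω z) / (1 - ω z))
    (g : ℂ → ℂ) (hgd : DifferentiableOn ℂ g (ball (0:ℂ) 1))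
    (hgne : ∀ z ∈ ball (0:ℂ) 1, deriv g z ≠ 0)
    (hgsub : ∃ ω : ℂ → ℂ, DifferentiableOn ℂ ω (ball (0:ℂ) 1) ∧ ω 0 = 0 ∧
      (∀ z ∈ ball (0:ℂ) 1, ω z ∈ ball (0:ℂ) 1) ∧
      ∀ z ∈ ball (0:ℂ) 1,
        1 + z * deriv (deriv g) z / deriv g z = (1 + 2 * ω z) / (1 - ω z))
    (T : ℂ → ℂ) (hT : ∀ z ∈ ball (0:ℂ) 1, HasDerivAt T (f z * deriv g z) z) :
    ∀ z ∈ ball (0:ℂ) 1, ‖z‖ < (2 - α) / (4 + α) →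
      α < (1 + z * deriv (deriv T) z / deriv T z).re := by
  obtain ⟨ω₁, hω₁d, hω₁0, hω₁m, hω₁⟩ := hfsub
  obtain ⟨ω₂, hω₂d, hω₂0, hω₂m, hω₂⟩ := hgsub
  intro z hz hzr
  rcases eq_or_ne z 0 with rfl | hz0
  · simpa using hα1
  have hz1 : ‖z‖ < 1 := mem_ball_zero_iff.1 hz
  have hball : ball (0:ℂ) 1 ∈ 𝓝 z := isOpen_ball.mem_nhds hz
  have bound : ∀ ω : ℂ → ℂ, DifferentiableOn ℂ ω (ball 0 1) → ω 0 = 0 →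
      MapsTo ω (ball 0 1) (ball 0 1) →
        (1 - 2 * ‖z‖) / (1 + ‖z‖) ≤ ((1 + 2 * ω z) / (1 - ω z)).re := by
    intro ω hd h₀ hmaps
    convert div_one_add_mul_schwarz_re_ge (A := 2) (B := -1) (by norm_num) (by norm_num)
      hd h₀ hmaps hz1 using 3 <;> push_cast <;> ring
  have hsplit := one_add_mul_deriv_deriv_div_deriv_of_hasDerivAt_mul
    (eventually_of_mem hball hT) (hfd.differentiableAt hball)
    ((hgd.analyticOnNhd isOpen_ball).deriv z hz).differentiableAt (hfne z hz hz0) (hgne z hz)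
  rw [hsplit, hω₁ z hz hz0, hω₂ z hz, add_re]
  linarith [lt_two_mul_div_of_lt_div (by linarith) hzr (norm_nonneg z),
    bound ω₁ hω₁d hω₁0 hω₁m, bound ω₂ hω₂d hω₂0 hω₂m]

theorem stmt3 (α : ℝ) (hα0 : 0 ≤ α) (hα1 : α < 1)
    (f : ℂ → ℂ) (hfd : DifferentiableOn ℂ f (ball (0:ℂ) 1))
    (hf0 : f 0 = 0) (hf1 : deriv f 0 = 1)
    (hfne : ∀ z ∈ ball (0:ℂ) 1, z ≠ 0 → f z ≠ 0)
    (hfsub : ∃ ω : ℂ → ℂ, DifferentiableOn ℂ ω (ball (0:ℂ) 1) ∧ ω 0 = 0 ∧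
      (∀ z ∈ ball (0:ℂ) 1, ω z ∈ ball (0:ℂ) 1) ∧
      ∀ z ∈ ball (0:ℂ) 1, z ≠ 0 →
        z * deriv f z / f z = (1 + 2 * ω z) / (1 - ω z))
    (g : ℂ → ℂ) (hgd : DifferentiableOn ℂ g (ball (0:ℂ) 1))
    (hg0 : g 0 = 0) (hg1 : deriv g 0 = 1)
    (hgne : ∀ z ∈ ball (0:ℂ) 1, deriv g z ≠ 0)
    (hgsub : ∃ ω : ℂ → ℂ, DifferentiableOn ℂ ω (ball (0:ℂ) 1) ∧ ω 0 = 0 ∧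
      (∀ z ∈ ball (0:ℂ) 1, ω z ∈ ball (0:ℂ) 1) ∧
      ∀ z ∈ ball (0:ℂ) 1,
        1 + z * deriv (deriv g) z / deriv g z = (1 + 2 * ω z) / (1 - ω z))
    (T : ℂ → ℂ) (hT : ∀ z ∈ ball (0:ℂ) 1, HasDerivAt T (f z * deriv g z) z) :
    ∀ z ∈ ball (0:ℂ) 1, ‖z‖ < (2 - α) / (4 + α) →
      α < (1 + z * deriv (deriv T) z / deriv T z).re :=
  stmt3_general α hα0 hα1 f hfd hfne hfsub g hgd hgne hgsub T hT
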